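/- For a finite quiver Q and finite-dimensional representations N, M over a field K, dim Hom_Q(N,M) − dim Ext¹_Q(N,M) = ⟨dim N, dim M⟩, where ⟨e,d⟩ = Σ_{i∈Q₀} e_i d_i − Σ_{α∈Q₁} e_{s(α)} d_{t(α)} is the Euler form of Q. -/

import Mathlib

/-!
STATEMENT 2: For a finite acyclic quiver Q and finite-dimensional representations N, M
over a field K, `dim Hom_Q(N,M) − dim Ext¹_Q(N,M) = ⟨dim N, dim M⟩`, where
`⟨e,d⟩ = Σ_i e_i d_i − Σ_{α} e_{s α} d_{t α}` is the Euler form of Q.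

Here `Hom_Q(N,M)` is the space of morphisms of representations and `Ext¹_Q(N,M)` is
computed, via the standard projective resolution of `N` over the (hereditary) path
algebra, as the cokernel of the map `Φ^M_N : ⊕ᵢ Hom(K^{eᵢ},K^{dᵢ}) →
⊕_α Hom(K^{e_{s α}},K^{d_{t α}})`, `(fᵢ) ↦ (M_α f_{s α} − f_{t α} N_α)`.
Acyclicity is expressed via the quiver structure on `V`: every path from a vertex
to itself is trivial.
-/

noncomputable section
open Matrix

variable {V A : Type}

abbrev QRep (K : Type) [Field K] (s t : A → V) (d : V → ℕ) : Type :=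
  ∀ a : A, Matrix (Fin (d (t a))) (Fin (d (s a))) K

def Phi (K : Type) [Field K] (s t : A → V) {e d : V → ℕ}
    (N : QRep K s t e) (M : QRep K s t d) :
    (∀ i : V, Matrix (Fin (d i)) (Fin (e i)) K) →ₗ[K]
      (∀ a : A, Matrix (Fin (d (t a))) (Fin (e (s a))) K) where
  toFun f := fun a => M a * f (s a) - f (t a) * N a
  map_add' f g := by
    funext a
    simp only [Pi.add_apply, Matrix.mul_add, Matrix.add_mul]
    abel
  map_smul' c f := by
    funext a
    simp only [Pi.smul_apply, Matrix.mul_smul, Matrix.smul_mul, smul_sub, RingHom.id_apply]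

def homRep (K : Type) [Field K] (s t : A → V) {e d : V → ℕ}
    (N : QRep K s t e) (M : QRep K s t d) :
    Submodule K (∀ i : V, Matrix (Fin (d i)) (Fin (e i)) K) where
  carrier := {f | ∀ a : A, M a * f (s a) = f (t a) * N a}
  add_mem' := by
    intro f g hf hg a
    simp only [Pi.add_apply, Matrix.mul_add, Matrix.add_mul, hf a, hg a]
  zero_mem' := by intro a; simp
  smul_mem' := by
    intro c f hf a
    simp only [Pi.smul_apply, Matrix.mul_smul, Matrix.smul_mul, hf a]

/-- `Ext¹_Q(N, M)`, computed as the cokernel of `Φ^M_N` (standard resolution). -/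
abbrev Ext1 (K : Type) [Field K] (s t : A → V) {e d : V → ℕ}
    (N : QRep K s t e) (M : QRep K s t d) : Type :=
  (∀ a : A, Matrix (Fin (d (t a))) (Fin (e (s a))) K) ⧸ LinearMap.range (Phi K s t N M)

/-- The Euler form `⟨e,d⟩ = Σ_i e_i d_i − Σ_α e_{s α} d_{t α}` of the quiver. -/
def eulerForm [Fintype V] [Fintype A] (s t : A → V) (x y : V → ℤ) : ℤ :=
  (∑ i : V, x i * y i) - ∑ a : A, x (s a) * y (t a)

/-- The quiver structure on `V` induced by `(A, s, t)` (used to express acyclicity). -/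
def quiverOf (s t : A → V) : Quiver V := ⟨fun i j => {a : A // s a = i ∧ t a = j}⟩

theorem LinearMap.finrank_ker_sub_finrank_quotient_range {K X Y : Type*} [DivisionRing K]
    [AddCommGroup X] [Module K X] [FiniteDimensional K X]
    [AddCommGroup Y] [Module K Y] [FiniteDimensional K Y] (f : X →ₗ[K] Y) :
    (Module.finrank K (LinearMap.ker f) : ℤ) - Module.finrank K (Y ⧸ LinearMap.range f) =
      Module.finrank K X - Module.finrank K Y := by
  have hX := f.finrank_range_add_finrank_ker
  have hY := (LinearMap.range f).finrank_quotient_add_finrank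
  omega

theorem Module.finrank_pi_matrix_fin {R ι : Type*} [Ring R] [StrongRankCondition R] [Fintype ι]
    (m n : ι → ℕ) :
    Module.finrank R (∀ i : ι, Matrix (Fin (m i)) (Fin (n i)) R) = ∑ i, m i * n i := by
  simp [Module.finrank_pi_fintype, Module.finrank_matrix]

theorem homRep_eq_ker_Phi (K : Type) [Field K] (s t : A → V) {e d : V → ℕ}
    (N : QRep K s t e) (M : QRep K s t d) :
    homRep K s t N M = LinearMap.ker (Phi K s t N M) := by
  ext f
  simp only [LinearMap.mem_ker, funext_iff, Pi.zero_apply, Phi, LinearMap.coe_mk, AddHom.coe_mk,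
    sub_eq_zero]
  rfl

theorem finrank_hom_sub_finrank_ext_eq_eulerForm_general
    (K : Type) [Field K] [Fintype V] [Fintype A]
    (s t : A → V)
    (e d : V → ℕ) (N : QRep K s t e) (M : QRep K s t d) :
    (Module.finrank K (homRep K s t N M) : ℤ) -
        (Module.finrank K (Ext1 K s t N M) : ℤ) =
      eulerForm s t (fun i => (e i : ℤ)) (fun i => (d i : ℤ)) := by
  rw [homRep_eq_ker_Phi, LinearMap.finrank_ker_sub_finrank_quotient_range,
    Module.finrank_pi_matrix_fin, Module.finrank_pi_matrix_fin, eulerForm]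
  push_cast
  simp only [mul_comm]

/-- `dim Hom_Q(N,M) − dim Ext¹_Q(N,M) = ⟨dim N, dim M⟩` for a finite acyclic quiver. -/
theorem finrank_hom_sub_finrank_ext_eq_eulerForm
    (K : Type) [Field K] [Fintype V] [Fintype A]
    (s t : A → V)
    (hacyclic : ∀ (i : V) (p : @Quiver.Path V (quiverOf s t) i i),
      p = @Quiver.Path.nil V (quiverOf s t) i)
    (e d : V → ℕ) (N : QRep K s t e) (M : QRep K s t d) :
    (Module.finrank K (homRep K s t N M) : ℤ) -
        (Module.finrank K (Ext1 K s t N M) : ℤ) =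
      eulerForm s t (fun i => (e i : ℤ)) (fun i => (d i : ℤ)) :=
  finrank_hom_sub_finrank_ext_eq_eulerForm_general K s t e d N M

end
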